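/- arXiv:quant-ph/9910061 — 5 statements merged into one kernel-verified Lean document; each statement's English description precedes it below -/
import Mathlib

section
/- Let N be an odd positive integer and let C be a cyclic binary code of length N which is weakly self-dual (C ⊆ C^⊥). Then C is doubly even: the Hamming weight of every codeword of C is divisible by four. -/
open Polynomial

/-- Cyclic shift: `(c_0,…,c_{N-1}) ↦ (c_{N-1},c_0,…,c_{N-2})`. -/
def cshift {N : ℕ} {F : Type*} (c : Fin N → F) : Fin N → F :=
  fun i => c ((finRotate N).symm i)

/-- The code polynomial associated to a codeword. -/
noncomputable def toPoly {F : Type*} [Semiring F] {N : ℕ} (c : Fin N → F) : Polynomial F :=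
  ∑ i, Polynomial.C (c i) * Polynomial.X ^ (i : ℕ)

/-- The dual code of a linear code. -/
def dualCode {F : Type*} [CommRing F] {ι : Type*} [Fintype ι]
    (C : Submodule F (ι → F)) : Submodule F (ι → F) where
  carrier := { v | ∀ c ∈ C, ∑ i, c i * v i = 0 }
  zero_mem' := by intro c hc; simp
  add_mem' := by
    intro a b ha hb c hc
    simp [mul_add, Finset.sum_add_distrib, ha c hc, hb c hc]
  smul_mem' := by
    intro r a ha c hc
    simp [Pi.smul_apply, smul_eq_mul, mul_left_comm, ← Finset.mul_sum, ha c hc]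

/-- `g` is the generator polynomial of `C`: the (unique) monic nonzero code
polynomial of least degree. -/
def IsGenPoly {F : Type*} [Field F] {N : ℕ} (C : Submodule F (Fin N → F))
    (g : Polynomial F) : Prop :=
  g.Monic ∧ (∃ c ∈ C, toPoly c = g) ∧
    ∀ c ∈ C, toPoly c ≠ 0 → g.degree ≤ (toPoly c).degree

/-!
Since `C ⊆ C^⊥`, any two codewords are orthogonal and every codeword has even weight, so
the sum of the coordinates of `c ∈ C` vanishes. For orthogonal binary vectors,
`wt (a + b) = wt a + wt b - 2 |supp a ∩ supp b|` with `|supp a ∩ supp b|` even, so the weight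
is additive modulo `4` on `C`. Adding the `N` cyclic shifts of `c` one at a time gives
`wt (∑ shifts) ≡ N · wt c (mod 4)`; but that sum is the constant vector `∑ c_i = 0`.
Hence `4 ∣ N · wt c`, and `N` is odd.
-/

open Finset

section Weight

variable {ι : Type*} [Fintype ι]

lemma hammingNorm_eq_sum_val (c : ι → ZMod 2) : hammingNorm c = ∑ i, (c i).val := by
  rw [hammingNorm, card_filter]
  exact sum_congr rfl fun i _ => by generalize c i = x; revert x; decide

lemma hammingNorm_add_add_two_mul_sum (a b : ι → ZMod 2) :
    hammingNorm (a + b) + 2 * ∑ i, (a i).val * (b i).val = hammingNorm a + hammingNorm b := by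
  simp only [hammingNorm_eq_sum_val, mul_sum, ← sum_add_distrib]
  refine sum_congr rfl fun i _ => ?_
  have key : ∀ x y : ZMod 2, (x + y).val + 2 * (x.val * y.val) = x.val + y.val := by decide
  exact key (a i) (b i)

lemma hammingNorm_add_of_sum_mul_eq_zero {a b : ι → ZMod 2} (h : ∑ i, a i * b i = 0) :
    (hammingNorm (a + b) : ZMod 4) = hammingNorm a + hammingNorm b := by
  obtain ⟨k, hk⟩ : 2 ∣ ∑ i, (a i).val * (b i).val := by
    rw [← ZMod.natCast_eq_zero_iff]
    push_cast
    simpa only [ZMod.natCast_val, ZMod.cast_id', id] using h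
  have h4 := congrArg (Nat.cast : ℕ → ZMod 4) (hammingNorm_add_add_two_mul_sum a b)
  rw [hk, ← mul_assoc, Nat.cast_add, Nat.cast_mul, show ((2 * 2 : ℕ) : ZMod 4) = 0 from rfl,
    zero_mul, add_zero, Nat.cast_add] at h4
  exact h4

lemma sum_mul_self_zmod_two (c : ι → ZMod 2) : ∑ i, c i * c i = ∑ i, c i := by
  have key : ∀ x : ZMod 2, x * x = x := by decide
  simp only [key]

end Weight

section Shift

variable {N : ℕ} {F : Type*}

lemma hammingNorm_cshift [Zero F] [DecidableEq F] (c : Fin N → F) :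
    hammingNorm (cshift c) = hammingNorm c := by
  simp only [hammingNorm, cshift]
  exact card_equiv (finRotate N).symm (by simp)

lemma hammingNorm_iterate_cshift [Zero F] [DecidableEq F] (c : Fin N → F) (m : ℕ) :
    hammingNorm (cshift^[m] c) = hammingNorm c := by
  induction m with
  | zero => rfl
  | succ m ih => rw [Function.iterate_succ_apply', hammingNorm_cshift, ih]

open Fin.NatCast in
lemma iterate_cshift_apply [NeZero N] (c : Fin N → F) (m : ℕ) (k : Fin N) :
    cshift^[m] c k = c (k - m) := by
  induction m generalizing k with
  | zero => simp
  | succ m ih =>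
    have hrot : (finRotate N).symm k = k - 1 := by
      rw [Equiv.symm_apply_eq, finRotate_apply, sub_add_cancel]
    rw [Function.iterate_succ_apply', cshift, hrot, ih, Nat.cast_succ, sub_sub, add_comm]

open Fin.NatCast in
lemma sum_range_iterate_cshift [NeZero N] [AddCommMonoid F] (c : Fin N → F) :
    ∑ m ∈ range N, cshift^[m] c = fun _ => ∑ i, c i := by
  funext k
  rw [Finset.sum_apply, ← Fin.sum_univ_eq_sum_range (fun m => cshift^[m] c k)]
  simp only [iterate_cshift_apply, Fin.cast_val_eq_self]
  exact Equiv.sum_comp (Equiv.subLeft k) c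

end Shift

section CyclicCode

variable {N : ℕ} {C : Submodule (ZMod 2) (Fin N → ZMod 2)} {c : Fin N → ZMod 2}

lemma iterate_cshift_mem (hcyc : ∀ c ∈ C, cshift c ∈ C) (hc : c ∈ C) (m : ℕ) :
    cshift^[m] c ∈ C := by
  induction m with
  | zero => exact hc
  | succ m ih => rw [Function.iterate_succ_apply']; exact hcyc _ ih

lemma sum_eq_zero_of_le_dualCode (hsd : C ≤ dualCode C) (hc : c ∈ C) : ∑ i, c i = 0 := by
  rw [← sum_mul_self_zmod_two]
  exact hsd hc c hc

lemma hammingNorm_sum_range_iterate_cshift (hcyc : ∀ c ∈ C, cshift c ∈ C)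
    (hsd : C ≤ dualCode C) (hc : c ∈ C) (m : ℕ) :
    (hammingNorm (∑ j ∈ range m, cshift^[j] c) : ZMod 4) = m * hammingNorm c := by
  induction m with
  | zero => simp
  | succ m ih =>
    have hsum : ∑ j ∈ range m, cshift^[j] c ∈ C :=
      C.sum_mem fun j _ => iterate_cshift_mem hcyc hc j
    rw [sum_range_succ, hammingNorm_add_of_sum_mul_eq_zero
      (hsd (iterate_cshift_mem hcyc hc m) _ hsum), ih, hammingNorm_iterate_cshift]
    push_cast
    ring

end CyclicCode

theorem stmt_0_general (N : ℕ) (hodd : Odd N)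
    (C : Submodule (ZMod 2) (Fin N → ZMod 2))
    (hcyc : ∀ c ∈ C, cshift c ∈ C)
    (hsd : C ≤ dualCode C) :
    ∀ c ∈ C, 4 ∣ hammingNorm c := by
  intro c hc
  have : NeZero N := ⟨hodd.pos.ne'⟩
  have hzero : ∑ j ∈ range N, cshift^[j] c = 0 := by
    rw [sum_range_iterate_cshift, sum_eq_zero_of_le_dualCode hsd hc]
    rfl
  have h := hammingNorm_sum_range_iterate_cshift hcyc hsd hc N
  rw [hzero, hammingNorm_zero, Nat.cast_zero, ← Nat.cast_mul, eq_comm,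
    ZMod.natCast_eq_zero_iff] at h
  exact (Nat.Coprime.pow_left 2 (Nat.coprime_two_left.mpr hodd)).dvd_of_dvd_mul_left h

/-- Any weakly self-dual cyclic binary code of odd length is doubly even:
the Hamming weight of every codeword is divisible by four. -/
theorem stmt_0 (N : ℕ) (hN : 0 < N) (hodd : Odd N)
    (C : Submodule (ZMod 2) (Fin N → ZMod 2))
    (hcyc : ∀ c ∈ C, cshift c ∈ C)
    (hsd : C ≤ dualCode C) :
    ∀ c ∈ C, 4 ∣ hammingNorm c :=
  stmt_0_general N hodd C hcyc hsd
end

section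
/- Let N be an odd positive integer and let C be a weakly self-dual cyclic binary code of length N with generator polynomial g(X). Then the number of nonzero coefficients of g(X) is divisible by four. -/
/-!
Let `c` be the codeword whose code polynomial is `g`, and `s ⊆ ℤ/N` its support. Every cyclic
shift of `c` lies in `C ⊆ C^⊥`, so each autocorrelation `n k = #{i ∈ s | i - k ∈ s}` is even.
Counting pairs gives `∑ k, n k = |s|²`, while `n 0 = |s|` and `n (-k) = n k`. As `N` is odd,
`k ≠ -k` for `k ≠ 0`, so the nonzero shifts pair up and contribute a multiple of `4`. Hence
`|s|² ≡ |s| [MOD 4]`, and since `|s| = n 0` is even, `4 ∣ |s|`.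
-/

open Polynomial

open Finset

theorem eq_zero_of_neg_eq_self_of_odd_card {G : Type*} [AddGroup G] [Finite G]
    (hG : Odd (Nat.card G)) {a : G} (ha : -a = a) : a = 0 := by
  apply (nsmulCoprime (Nat.coprime_two_left.2 hG).symm).injective
  simp only [nsmulCoprime_apply, two_nsmul, add_zero]
  nth_rw 1 [← ha]
  exact neg_add_cancel a

section Autocorrelation

variable {G : Type*} [AddCommGroup G] [DecidableEq G] (s : Finset G)

def autocorr (k : G) : ℕ := #{i ∈ s | i - k ∈ s}

theorem autocorr_zero : autocorr s 0 = #s := by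
  simp [autocorr]

theorem autocorr_neg (k : G) : autocorr s (-k) = autocorr s k := by
  refine card_nbij' (· + k) (· - k) ?_ ?_ ?_ ?_ <;> intro i <;> simp +contextual

theorem sum_autocorr [Fintype G] : ∑ k, autocorr s k = #s * #s := by
  simp only [autocorr, card_filter]
  rw [sum_comm, ← sum_const_nat]
  intro i _
  rw [Fintype.sum_equiv (Equiv.subLeft i) (fun k => if i - k ∈ s then 1 else 0)
      (fun j => if j ∈ s then 1 else 0) (fun _ => rfl),
    ← card_filter, filter_mem_eq_inter, univ_inter]

theorem four_dvd_sum_autocorr_erase_zero [Fintype G] (hG : Odd (Fintype.card G))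
    (heven : ∀ k, Even (autocorr s k)) : 4 ∣ ∑ k ∈ univ.erase 0, autocorr s k := by
  rw [← ZMod.natCast_eq_zero_iff, Nat.cast_sum]
  refine sum_involution (fun k _ => -k) (fun k _ => ?_) (fun k hk _ hneg => ?_)
    (fun k hk => ?_) (fun k _ => neg_neg k)
  · obtain ⟨m, hm⟩ := heven k
    rw [autocorr_neg, hm, ← Nat.cast_add, ZMod.natCast_eq_zero_iff]
    exact ⟨m, by ring⟩
  · exact (mem_erase.1 hk).1 (eq_zero_of_neg_eq_self_of_odd_card (by simpa using hG) hneg)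
  · simpa using (mem_erase.1 hk).1

theorem four_dvd_card_of_even_autocorr [Fintype G] (hG : Odd (Fintype.card G))
    (heven : ∀ k, Even (autocorr s k)) : 4 ∣ #s := by
  have hsq : #s * #s = #s + ∑ k ∈ univ.erase 0, autocorr s k := by
    rw [← sum_autocorr, ← add_sum_erase _ _ (mem_univ 0), autocorr_zero]
  obtain ⟨m, hm⟩ := autocorr_zero s ▸ heven 0
  have h4 : 4 ∣ #s * #s := ⟨m * m, by rw [hm]; ring⟩
  rwa [hsq, Nat.dvd_add_left (four_dvd_sum_autocorr_erase_zero s hG heven)] at h4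

end Autocorrelation

theorem cshift_apply {N : ℕ} [NeZero N] {F : Type*} (c : Fin N → F) (i : Fin N) :
    cshift c i = c (i - 1) :=
  congrArg c (by rw [Equiv.symm_apply_eq, finRotate_apply, sub_add_cancel])

theorem rotate_mem_of_cshift_mem {N : ℕ} [NeZero N] {F : Type*} {S : Set (Fin N → F)}
    (hcyc : ∀ c ∈ S, cshift c ∈ S) {c : Fin N → F} (hc : c ∈ S) (k : Fin N) :
    (fun i => c (i - k)) ∈ S := by
  obtain ⟨n, rfl⟩ := Nat.exists_eq_succ_of_ne_zero (NeZero.ne N)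
  induction k using Fin.induction with
  | zero => simpa using hc
  | succ k ih =>
    convert hcyc _ ih using 1
    ext i
    rw [cshift_apply, sub_sub, add_comm, Fin.coeSucc_eq_succ]

theorem sum_mul_rotate_eq_zero {N : ℕ} [NeZero N] {F : Type*} [CommRing F]
    {C : Submodule F (Fin N → F)} (hcyc : ∀ c ∈ C, cshift c ∈ C) (hsd : C ≤ dualCode C)
    {c : Fin N → F} (hc : c ∈ C) (k : Fin N) : ∑ i, c i * c (i - k) = 0 := by
  have hrot : (fun i => c (i - k)) ∈ C := rotate_mem_of_cshift_mem (S := C) (c := c) hcyc hc k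
  rw [← hsd hc _ hrot]
  exact Fintype.sum_congr _ _ fun i => mul_comm _ _

theorem sum_mul_sub_eq_autocorr {G : Type*} [AddCommGroup G] [Fintype G] [DecidableEq G]
    (c : G → ZMod 2) (k : G) :
    ∑ i, c i * c (i - k) = (autocorr (univ.filter fun i => c i ≠ 0) k : ZMod 2) := by
  have hmul : ∀ x y : ZMod 2, x * y = if x ≠ 0 ∧ y ≠ 0 then 1 else 0 := by decide
  simp only [hmul, sum_boole, autocorr, filter_filter, mem_filter, mem_univ, true_and]

theorem toPoly_eq_ofFn {F : Type*} [Semiring F] [DecidableEq F] {N : ℕ} (c : Fin N → F) :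
    toPoly c = ofFn N c := by
  simp only [toPoly, ofFn_eq_sum_monomial, C_mul_X_pow_eq_monomial]

theorem card_support_toPoly {F : Type*} [Semiring F] [DecidableEq F] {N : ℕ} (c : Fin N → F) :
    #(toPoly c).support = #{i | c i ≠ 0} := by
  have hsupp : (toPoly c).support = (univ.filter fun i => c i ≠ 0).map Fin.valEmbedding := by
    ext m
    rw [toPoly_eq_ofFn, mem_support_iff]
    by_cases hm : m < N
    · simp only [ofFn_coeff_eq_val_of_lt _ hm, mem_map, mem_filter, mem_univ,
        true_and, Fin.valEmbedding_apply]
      exact ⟨fun h => ⟨_, h, rfl⟩, by rintro ⟨i, hi, rfl⟩; exact hi⟩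
    · simp only [ofFn_coeff_eq_zero_of_ge _ (Nat.le_of_not_lt hm), ne_eq,
        not_true_eq_false, false_iff, mem_map, not_exists, not_and]
      exact fun i _ hi => hm (hi ▸ i.isLt)
  rw [hsupp, card_map]

theorem stmt_1_general (N : ℕ) (hodd : Odd N)
    (C : Submodule (ZMod 2) (Fin N → ZMod 2))
    (hcyc : ∀ c ∈ C, cshift c ∈ C)
    (hsd : C ≤ dualCode C)
    (g : Polynomial (ZMod 2)) (hg : IsGenPoly C g) :
    4 ∣ g.support.card := by
  obtain ⟨-, ⟨c, hc, rfl⟩, -⟩ := hg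
  have : NeZero N := ⟨hodd.pos.ne'⟩
  rw [card_support_toPoly]
  refine four_dvd_card_of_even_autocorr _ (by simpa using hodd) fun k => ?_
  rw [← ZMod.natCast_eq_zero_iff_even, ← sum_mul_sub_eq_autocorr]
  exact sum_mul_rotate_eq_zero hcyc hsd hc k

/-- For a weakly self-dual cyclic binary code of odd length with generator
polynomial g, the number of nonzero coefficients of g is divisible by four. -/
theorem stmt_1 (N : ℕ) (hN : 0 < N) (hodd : Odd N)
    (C : Submodule (ZMod 2) (Fin N → ZMod 2))
    (hcyc : ∀ c ∈ C, cshift c ∈ C)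
    (hsd : C ≤ dualCode C)
    (g : Polynomial (ZMod 2)) (hg : IsGenPoly C g) :
    4 ∣ g.support.card :=
  stmt_1_general N hodd C hcyc hsd g hg
end

section
/- Let C be a linear code of length N over F_{2^k} that is weakly self-dual (C ⊆ C^⊥), and let B be a self-dual basis of F_{2^k} over F_2 (a basis equal to its own dual basis with respect to the trace form). Then the binary expansion C_B of C with respect to B is a weakly self-dual binary code: C_B ⊆ (C_B)^⊥. -/
/-- The binary expansion of a linear code `C ⊆ F^N` over the field
`F = F_{2^k}` with respect to a basis `B` of `F` over `F_2`. -/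
def binExp {F : Type*} [Field F] [Algebra (ZMod 2) F] {N k : ℕ}
    (B : Module.Basis (Fin k) (ZMod 2) F) (C : Submodule F (Fin N → F)) :
    Submodule (ZMod 2) (Fin N × Fin k → ZMod 2) where
  carrier := { c | (fun i => ∑ j, c (i, j) • B j) ∈ C }
  zero_mem' := by
    have h := C.zero_mem
    have e : (0 : Fin N → F) = fun i => ∑ j, (0 : Fin N × Fin k → ZMod 2) (i, j) • B j := by
      funext i; simp
    rwa [e] at h
  add_mem' := by
    intro a b ha hb
    have h := C.add_mem ha hb
    have e : ((fun i => ∑ j, a (i, j) • B j) + fun i => ∑ j, b (i, j) • B j)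
        = fun i => ∑ j, (a + b) (i, j) • B j := by
      funext i
      simp [add_smul, Finset.sum_add_distrib]
    rwa [e] at h
  smul_mem' := by
    intro r a ha
    have h := C.smul_of_tower_mem r ha
    have e : (r • fun i => ∑ j, a (i, j) • B j)
        = fun i => ∑ j, (r • a) (i, j) • B j := by
      funext i
      simp [Finset.smul_sum, smul_smul]
    rwa [e] at h

section TraceForm

variable {K L : Type*} [CommRing K] [CommRing L] [Algebra K L] {ι : Type*} [Fintype ι]
  [DecidableEq ι]

theorem Algebra.trace_sum_smul_mul_sum_smul (b : ι → L)
    (hb : ∀ i j, Algebra.trace K L (b i * b j) = if i = j then 1 else 0) (x y : ι → K) :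
    Algebra.trace K L ((∑ i, x i • b i) * ∑ j, y j • b j) = ∑ i, x i * y i := by
  simp [Finset.sum_mul_sum, map_sum, hb, mul_comm]

theorem sum_mul_eq_trace_sum_mul_expand {κ : Type*} [Fintype κ] (b : ι → L)
    (hb : ∀ i j, Algebra.trace K L (b i * b j) = if i = j then 1 else 0) (x y : κ × ι → K) :
    ∑ p, x p * y p =
      Algebra.trace K L (∑ n, (∑ i, x (n, i) • b i) * ∑ i, y (n, i) • b i) := by
  simp only [map_sum, Algebra.trace_sum_smul_mul_sum_smul b hb, Fintype.sum_prod_type]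

end TraceForm

theorem stmt_13_general {F : Type*} [Field F] [Algebra (ZMod 2) F]
    (N k : ℕ)
    (B : Module.Basis (Fin k) (ZMod 2) F)
    (hB : ∀ i j, Algebra.trace (ZMod 2) F (B i * B j) = if i = j then 1 else 0)
    (C : Submodule F (Fin N → F))
    (hsd : C ≤ dualCode C) :
    binExp B C ≤ dualCode (binExp B C) := by
  intro a ha c hc
  rw [sum_mul_eq_trace_sum_mul_expand B hB, hsd ha _ hc, map_zero]

/-- The binary expansion of a weakly self-dual code over F_{2^k} with respect
to a self-dual basis is a weakly self-dual binary code. -/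
theorem stmt_13 {F : Type*} [Field F] [Fintype F] [Algebra (ZMod 2) F]
    (N k : ℕ)
    (B : Module.Basis (Fin k) (ZMod 2) F)
    (hB : ∀ i j, Algebra.trace (ZMod 2) F (B i * B j) = if i = j then 1 else 0)
    (C : Submodule F (Fin N → F))
    (hsd : C ≤ dualCode C) :
    binExp B C ≤ dualCode (binExp B C) :=
  stmt_13_general N k B hB C hsd
end

section
/- Let F_q be a finite field, N ≥ 1, 1 ≤ K ≤ N, d = N−K, and let g(X) = g_0 + g_1 X + … + g_d X^d ∈ F_q[X] with deg g = d (set g_j = 0 for j > d). Define the F_q-linear map E: F_q^N → F_q^N by E(r)_0 = g_0·r_{N−1} and E(r)_j = r_{j−1} + g_j·r_{N−1} for 1 ≤ j ≤ N−1. Then for all j_0,…,j_{d−1}, i_0,…,i_{K−1} ∈ F_q, the K-fold iterate E^K applied to the vector (j_0,…,j_{d−1}, i_0,…,i_{K−1}) equals the coefficient vector (p_0,…,p_{N−1}) of the polynomial p(X) = i(X)·g(X) + X^K·j(X), where i(X) = Σ_{l<K} i_l X^l and j(X) = Σ_{l<d} j_l X^l. In particular, if all j_l = 0, the result is the coefficient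 vector of the codeword i(X)·g(X). -/
open Polynomial

noncomputable def qseq {F : Type*} [Field F] (g : Polynomial F) (N : ℕ)
    (s : Polynomial F) : ℕ → Polynomial F
  | 0 => s
  | k+1 => Polynomial.X * qseq g N s k
      + Polynomial.C ((qseq g N s k).coeff (N-1)) * (g - Polynomial.X ^ N)

/-- One step of the linear feed-forward shift register for multiplication by a
fixed polynomial g of degree d = N - K is the linear map E with
E(r)₀ = g₀·r_{N-1} and E(r)_j = r_{j-1} + g_j·r_{N-1} for 1 ≤ j ≤ N-1.
Applying E K times to the initial state (j₀,…,j_{d-1}, i₀,…,i_{K-1}) yields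
the coefficient vector of p(X) = i(X)·g(X) + X^K·j(X); in particular for
j = 0 one obtains the codeword i(X)·g(X). -/
theorem stmt_15 {F : Type*} [Field F] [Fintype F] (N K d : ℕ)
    (hK : 1 ≤ K) (hKN : K ≤ N) (hd : d = N - K)
    (g : Polynomial F) (hdeg : g.natDegree = d)
    (E : (Fin N → F) → (Fin N → F))
    (hE : ∀ r : Fin N → F, ∀ m : Fin N,
      E r m = if (m : ℕ) = 0 then g.coeff 0 * r ⟨N - 1, by omega⟩
        else r ⟨(m : ℕ) - 1, by have := m.isLt; omega⟩ + g.coeff m * r ⟨N - 1, by omega⟩)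
    (j : Fin d → F) (i : Fin K → F) :
    (E^[K] (fun m => if hm : (m : ℕ) < d then j ⟨(m : ℕ), hm⟩
        else i ⟨(m : ℕ) - d, by have := m.isLt; omega⟩)
      = fun m : Fin N =>
        ((∑ l, Polynomial.C (i l) * Polynomial.X ^ (l : ℕ)) * g
          + Polynomial.X ^ K *
            (∑ l, Polynomial.C (j l) * Polynomial.X ^ (l : ℕ))).coeff m) ∧
    ((∀ l, j l = 0) →
      E^[K] (fun m => if hm : (m : ℕ) < d then j ⟨(m : ℕ), hm⟩
          else i ⟨(m : ℕ) - d, by have := m.isLt; omega⟩)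
        = fun m : Fin N =>
          ((∑ l, Polynomial.C (i l) * Polynomial.X ^ (l : ℕ)) * g).coeff m) := by
  have hdN : d < N := by omega
  have hNd : N = K + d := by omega
  set i' : ℕ → F := fun l => if h : l < K then i ⟨l, h⟩ else 0 with hi'
  set j' : ℕ → F := fun l => if h : l < d then j ⟨l, h⟩ else 0 with hj'
  set s : Fin N → F := (fun m => if hm : (m : ℕ) < d then j ⟨(m : ℕ), hm⟩
        else i ⟨(m : ℕ) - d, by have := m.isLt; omega⟩) with hs
  set sP : Polynomial F :=
    ∑ l ∈ Finset.range N, Polynomial.C (if l < d then j' l else i' (l - d)) * Polynomial.X ^ l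
    with hsPdef
  have hsP : ∀ t, sP.coeff t = if t < N then (if t < d then j' t else i' (t - d)) else 0 := by
    intro t
    rw [hsPdef, Polynomial.finset_sum_coeff]
    simp only [Polynomial.coeff_C_mul, Polynomial.coeff_X_pow, mul_ite, mul_one, mul_zero]
    rw [Finset.sum_ite_eq (Finset.range N)]
    simp [Finset.mem_range]
  have hgN : ∀ t, d < t → g.coeff t = 0 := fun t ht =>
    Polynomial.coeff_eq_zero_of_natDegree_lt (by omega)
  -- the one-step lemma
  have step : ∀ (r : Fin N → F) (f : Polynomial F),
      (∀ t, f.coeff t = if h : t < N then r ⟨t, h⟩ else 0) →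
      ∀ t, (Polynomial.X * f
          + Polynomial.C (r ⟨N - 1, by omega⟩) * (g - Polynomial.X ^ N)).coeff t
        = if h : t < N then E r ⟨t, h⟩ else 0 := by
    intro r f hf t
    rw [Polynomial.coeff_add, Polynomial.coeff_C_mul, Polynomial.coeff_sub,
      Polynomial.coeff_X_pow]
    rcases t with _ | t
    · rw [Polynomial.mul_coeff_zero, Polynomial.coeff_X_zero, zero_mul]
      rw [dif_pos (show 0 < N by omega), hE]
      rw [if_pos rfl, if_neg (show ¬ (0 = N) by omega)]
      ring
    · rw [Polynomial.coeff_X_mul, hf t]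
      by_cases h : t + 1 < N
      · rw [dif_pos h, dif_pos (show t < N by omega), hE]
        rw [if_neg (show ¬ ((⟨t+1, h⟩ : Fin N) : ℕ) = 0 from Nat.succ_ne_zero t)]
        rw [if_neg (show ¬ (t + 1 = N) by omega)]
        show r ⟨t, by omega⟩ + r ⟨N - 1, by omega⟩ * (g.coeff (t+1) - 0)
          = r ⟨t, by omega⟩ + g.coeff (t+1) * r ⟨N - 1, by omega⟩
        ring
      · rw [dif_neg h]
        rcases Nat.lt_or_ge (t+1) (N+1) with h1 | h1
        · have ht1 : t + 1 = N := by omega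
          rw [dif_pos (show t < N by omega), if_pos ht1]
          rw [hgN (t+1) (by omega)]
          have e : (⟨t, show t < N by omega⟩ : Fin N) = ⟨N - 1, by omega⟩ :=
            Fin.ext (show t = N - 1 by omega)
          rw [e]
          ring
        · rw [dif_neg (show ¬ (t < N) by omega), if_neg (show ¬ (t + 1 = N) by omega),
            hgN (t+1) (by omega)]
          ring
  -- coefficients of qseq track the iterates of E
  have key : ∀ k, ∀ t, (qseq g N sP k).coeff t
      = if h : t < N then E^[k] s ⟨t, h⟩ else 0 := by
    intro k
    induction k with
    | zero =>
      intro t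
      rw [show qseq g N sP 0 = sP from rfl, Function.iterate_zero, id_eq, hsP]
      by_cases h : t < N
      · rw [if_pos h, dif_pos h]
        simp only [hs]
        by_cases h2 : t < d
        · rw [if_pos h2, dif_pos h2]
          simp only [hj']
          rw [dif_pos h2]
        · rw [if_neg h2, dif_neg h2]
          simp only [hi']
          rw [dif_pos (show t - d < K by omega)]
      · rw [if_neg h, dif_neg h]
    | succ k ih =>
      intro t
      have h1 : (qseq g N sP k).coeff (N-1) = E^[k] s ⟨N - 1, by omega⟩ := by
        rw [ih (N-1), dif_pos (by omega)]
      rw [show qseq g N sP (k+1)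
          = Polynomial.X * qseq g N sP k
            + Polynomial.C ((qseq g N sP k).coeff (N-1)) * (g - Polynomial.X ^ N) from rfl,
        h1, Function.iterate_succ_apply']
      exact step (E^[k] s) (qseq g N sP k) ih t
  -- closed form for qseq
  have closed : ∀ k, k ≤ K → qseq g N sP k
      = Polynomial.X ^ k * sP
        + (∑ l ∈ Finset.range k, Polynomial.C (i' (K-1-l)) * Polynomial.X ^ (k-1-l))
          * (g - Polynomial.X ^ N) := by
    intro k hk
    induction k with
    | zero => simp [qseq]
    | succ k ih =>
      have hk' : k ≤ K := by omega
      have ihe := ih hk'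
      have hcoeff : (qseq g N sP k).coeff (N-1) = i' (K-1-k) := by
        rw [ihe, Polynomial.coeff_add]
        have h1 : (Polynomial.X ^ k * sP).coeff (N-1) = sP.coeff (N-1-k) := by
          rw [mul_comm, Polynomial.coeff_mul_X_pow', if_pos (by omega)]
        have h2 : ((∑ l ∈ Finset.range k,
            Polynomial.C (i' (K-1-l)) * Polynomial.X ^ (k-1-l))
              * (g - Polynomial.X ^ N)).coeff (N-1) = 0 := by
          rw [Finset.sum_mul, Polynomial.finset_sum_coeff]
          apply Finset.sum_eq_zero
          intro l hl
          rw [Finset.mem_range] at hl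
          rw [mul_assoc, Polynomial.coeff_C_mul, mul_comm (Polynomial.X ^ (k-1-l)),
            Polynomial.coeff_mul_X_pow', if_pos (by omega)]
          rw [Polynomial.coeff_sub, Polynomial.coeff_X_pow,
            hgN (N-1-(k-1-l)) (by omega), if_neg (by omega)]
          ring
        rw [h1, h2, add_zero, hsP, if_pos (by omega), if_neg (by omega)]
        congr 1
        omega
      rw [show qseq g N sP (k+1)
          = Polynomial.X * qseq g N sP k
            + Polynomial.C ((qseq g N sP k).coeff (N-1)) * (g - Polynomial.X ^ N) from rfl,
        hcoeff, ihe]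
      have hsum : (∑ l ∈ Finset.range (k+1),
          Polynomial.C (i' (K-1-l)) * Polynomial.X ^ (k+1-1-l))
          = Polynomial.X * (∑ l ∈ Finset.range k,
              Polynomial.C (i' (K-1-l)) * Polynomial.X ^ (k-1-l))
            + Polynomial.C (i' (K-1-k)) := by
        rw [Finset.sum_range_succ, Finset.mul_sum]
        congr 1
        · apply Finset.sum_congr rfl
          intro l hl
          rw [Finset.mem_range] at hl
          rw [show k+1-1-l = (k-1-l) + 1 by omega, pow_succ]
          ring
        · rw [show k+1-1-k = 0 by omega, pow_zero, mul_one]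
      rw [hsum, pow_succ]
      ring
  -- identify qseq K with the target polynomial
  set iP : Polynomial F := ∑ l ∈ Finset.range K, Polynomial.C (i' l) * Polynomial.X ^ l
    with hiPdef
  set jP : Polynomial F := ∑ l ∈ Finset.range d, Polynomial.C (j' l) * Polynomial.X ^ l
    with hjPdef
  have hsplit : sP = jP + Polynomial.X ^ d * iP := by
    rw [hsPdef, hjPdef, hiPdef, hNd]
    rw [show K + d = d + K by omega, Finset.sum_range_add]
    congr 1
    · apply Finset.sum_congr rfl
      intro l hl
      rw [Finset.mem_range] at hl
      rw [if_pos hl]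
    · rw [Finset.mul_sum]
      apply Finset.sum_congr rfl
      intro l hl
      rw [if_neg (by omega), show d + l - d = l by omega, pow_add]
      ring
  have hrev : (∑ l ∈ Finset.range K, Polynomial.C (i' (K-1-l)) * Polynomial.X ^ (K-1-l))
      = iP := by
    rw [hiPdef]
    exact Finset.sum_range_reflect
      (fun l => Polynomial.C (i' l) * Polynomial.X ^ l) K
  have hqK : qseq g N sP K = iP * g + Polynomial.X ^ K * jP := by
    rw [closed K le_rfl, hrev, hsplit]
    have hXN : (Polynomial.X : Polynomial F) ^ N = Polynomial.X ^ K * Polynomial.X ^ d := by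
      rw [← pow_add, ← hNd]
    rw [hXN]
    ring
  -- convert the Fin sums in the goal to range sums
  have hiFin : (∑ l : Fin K, Polynomial.C (i l) * Polynomial.X ^ (l : ℕ)) = iP := by
    rw [hiPdef, ← Fin.sum_univ_eq_sum_range (fun l => Polynomial.C (i' l) * Polynomial.X ^ l) K]
    apply Finset.sum_congr rfl
    intro l _
    show Polynomial.C (i l) * Polynomial.X ^ (l : ℕ)
      = Polynomial.C (i' (l : ℕ)) * Polynomial.X ^ (l : ℕ)
    simp only [hi']
    rw [dif_pos l.isLt]
  have hjFin : (∑ l : Fin d, Polynomial.C (j l) * Polynomial.X ^ (l : ℕ)) = jP := by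
    rw [hjPdef, ← Fin.sum_univ_eq_sum_range (fun l => Polynomial.C (j' l) * Polynomial.X ^ l) d]
    apply Finset.sum_congr rfl
    intro l _
    show Polynomial.C (j l) * Polynomial.X ^ (l : ℕ)
      = Polynomial.C (j' (l : ℕ)) * Polynomial.X ^ (l : ℕ)
    simp only [hj']
    rw [dif_pos l.isLt]
  have main : E^[K] s = fun m : Fin N =>
      ((∑ l, Polynomial.C (i l) * Polynomial.X ^ (l : ℕ)) * g
        + Polynomial.X ^ K *
          (∑ l, Polynomial.C (j l) * Polynomial.X ^ (l : ℕ))).coeff m := by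
    funext m
    rw [hiFin, hjFin, ← hqK]
    rw [key K m, dif_pos m.isLt]
  refine ⟨main, fun hj0 => ?_⟩
  rw [main]
  funext m
  have : (∑ l : Fin d, Polynomial.C (j l) * Polynomial.X ^ (l : ℕ)) = 0 := by
    apply Finset.sum_eq_zero
    intro l _
    rw [hj0 l, map_zero, zero_mul]
  rw [this, mul_zero, add_zero]
end

section
/- Let F be a field, g(X) = g_0 + g_1 X + … + g_{d−1} X^{d−1} + X^d a monic polynomial of degree d ≥ 1 over F, and f(X) = f_0 + f_1 X + … + f_μ X^μ ∈ F[X] with μ ≥ 0. Define the division shift register step: from state s = (s_0,…,s_{d−1}) ∈ F^d with input x ∈ F, output o = s_{d−1} and pass to the new state s' given by s'_0 = x − g_0·o and s'_j = s_{j−1} − g_j·o for 1 ≤ j ≤ d−1. Starting from the zero state and feeding the inputs f_μ, f_{μ−1}, …, f_0 in this order, the following hold: (1) for every 1 ≤ t ≤ μ+1, the state after t steps is the coefficient vector of P_t(X) mod g(X), where P_t(X) = Σ_{i=0}^{t−1} f_{μ−i} X^{t−1−i}; in particular after μ+1 steps the state is the coefficient vector of f(X) mod g(X); (2) the outputs o_1,…,o_{μ+1}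 satisfy f(X) div g(X) = Σ_{t=1}^{μ+1} o_t X^{μ+1−t}, i.e., the register outputs the coefficients of the quotient f div g, starting with the coefficient of X^{μ−d}. -/
open Polynomial

/-!
Feeding the inputs highest coefficient first builds the partial polynomials by Horner's rule,
`P_{t+1} = X · P_t + f_{μ-t}`. If `r = P_t mod g` has degree `< d` and `c` is its coefficient
of `X^(d-1)`, then `r X + a - c g` has degree `< d`, so it is the remainder of `P_{t+1}` and the
quotient grows as `q ↦ q X + c`. The register's update is exactly this on coefficient vectors,
with output `c`.
-/

namespace Polynomial

variable {R : Type*}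

/-- The partial polynomial `P_t` after `t` inputs is `hornerSum (fun i => f.coeff (μ - i)) t`. -/
noncomputable def hornerSum [Semiring R] (a : ℕ → R) (t : ℕ) : R[X] :=
  ∑ i ∈ Finset.range t, C (a i) * X ^ (t - 1 - i)

section Semiring

variable [Semiring R]

theorem hornerSum_zero (a : ℕ → R) : hornerSum a 0 = 0 := by
  simp [hornerSum]

theorem hornerSum_succ (a : ℕ → R) (t : ℕ) :
    hornerSum a (t + 1) = hornerSum a t * X + C (a t) := by
  rw [hornerSum, Finset.sum_range_succ, hornerSum, Finset.sum_mul, Nat.add_sub_cancel,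
    Nat.sub_self, pow_zero, mul_one]
  congr 1
  refine Finset.sum_congr rfl fun i hi => ?_
  rw [mul_assoc, ← pow_succ, show t - 1 - i + 1 = t - i by grind]

theorem hornerSum_coeff_sub_eq_self (f : R[X]) {μ : ℕ} (hf : f.natDegree ≤ μ) :
    hornerSum (fun i => f.coeff (μ - i)) (μ + 1) = f := by
  calc hornerSum (fun i => f.coeff (μ - i)) (μ + 1)
      = ∑ j ∈ Finset.range (μ + 1), C (f.coeff (μ + 1 - 1 - j)) * X ^ (μ + 1 - 1 - j) := by
        simp only [hornerSum, Nat.add_sub_cancel]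
    _ = ∑ j ∈ Finset.range (μ + 1), C (f.coeff j) * X ^ j :=
        Finset.sum_range_reflect (fun j => C (f.coeff j) * X ^ j) _
    _ = f := (as_sum_range_C_mul_X_pow' f (Nat.lt_succ_of_le hf)).symm

end Semiring

section Ring

variable [Ring R]

theorem coeff_mul_X_add_C_sub_C_mul (r g : R[X]) (a c : R) (m : ℕ) :
    (r * X + C a - C c * g).coeff m = (if m = 0 then a else r.coeff (m - 1)) - c * g.coeff m := by
  cases m <;> simp [coeff_C]

end Ring

section CommRing

variable [CommRing R] {g : R[X]}

theorem degree_mul_X_add_C_sub_C_mul_lt (hg : g.Monic) (hd : 0 < g.natDegree) {r : R[X]}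
    (hr : r.degree < g.degree) (a : R) :
    (r * X + C a - C (r.coeff (g.natDegree - 1)) * g).degree < g.degree := by
  rw [degree_eq_natDegree (ne_zero_of_natDegree_gt hd)] at hr ⊢
  refine degree_lt_iff_coeff_zero _ _ |>.2 fun m hm => ?_
  replace hm : g.natDegree ≤ m := by exact_mod_cast hm
  rw [coeff_mul_X_add_C_sub_C_mul, if_neg (by omega)]
  obtain rfl | hlt := hm.eq_or_lt
  · rw [hg.coeff_natDegree, mul_one, sub_self]
  · rw [coeff_eq_zero_of_degree_lt (hr.trans_le (by exact_mod_cast Nat.le_sub_one_of_lt hlt)),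
      coeff_eq_zero_of_natDegree_lt hlt, mul_zero, sub_zero]

theorem divByMonic_mul_X_add_C_and_modByMonic (hg : g.Monic) (hd : 0 < g.natDegree)
    (p : R[X]) (a : R) :
    (p * X + C a) /ₘ g = p /ₘ g * X + C ((p %ₘ g).coeff (g.natDegree - 1)) ∧
    (p * X + C a) %ₘ g =
      p %ₘ g * X + C a - C ((p %ₘ g).coeff (g.natDegree - 1)) * g := by
  refine div_modByMonic_unique _ _ hg ⟨?_, degree_mul_X_add_C_sub_C_mul_lt hg hd ?_ a⟩
  · linear_combination X * modByMonic_add_div p g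
  · have : Nontrivial R := Nontrivial.of_polynomial_ne (ne_zero_of_natDegree_gt hd)
    exact degree_modByMonic_lt p hg

theorem divByMonic_hornerSum (hg : g.Monic) (hd : 0 < g.natDegree) (a : ℕ → R) (t : ℕ) :
    hornerSum a t /ₘ g = hornerSum (fun s => (hornerSum a s %ₘ g).coeff (g.natDegree - 1)) t := by
  induction t with
  | zero => simp [hornerSum_zero]
  | succ t ih =>
    rw [hornerSum_succ, (divByMonic_mul_X_add_C_and_modByMonic hg hd _ _).1, ih, hornerSum_succ]

theorem divisionRegister_state_eq_coeff_modByMonic (hg : g.Monic) {d : ℕ} (hdeg : g.natDegree = d)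
    (hd : 0 < d) (a : ℕ → R) (n : ℕ) (S : ℕ → Fin d → R) (hS0 : S 0 = 0)
    (hstep : ∀ t < n, ∀ m : Fin d,
      S (t + 1) m = (if (m : ℕ) = 0 then a t else S t ⟨(m : ℕ) - 1, by omega⟩)
        - g.coeff m * S t ⟨d - 1, by omega⟩) :
    ∀ t ≤ n, ∀ m : Fin d, S t m = (hornerSum a t %ₘ g).coeff m := by
  subst hdeg
  intro t
  induction t with
  | zero => simp [hS0, hornerSum_zero]
  | succ t ih =>
    intro ht m
    rw [hstep t ht m, hornerSum_succ, (divByMonic_mul_X_add_C_and_modByMonic hg hd _ _).2,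
      coeff_mul_X_add_C_sub_C_mul, ih (by omega) ⟨_, Nat.sub_one_lt_of_lt hd⟩, mul_comm]
    split_ifs
    · rfl
    · rw [ih (by omega)]

end CommRing

end Polynomial

/-- A linear feed-back shift register dividing by a monic polynomial g of
degree d ≥ 1: from state s with input x it outputs o = s_{d-1} and passes to
the state s' with s'₀ = x - g₀·o and s'_j = s_{j-1} - g_j·o.  Starting from
the zero state and feeding the coefficients f_μ, f_{μ-1}, …, f₀ of f:
(1) after t steps (1 ≤ t ≤ μ+1) the state is the coefficient vector of
P_t(X) mod g(X) where P_t(X) = Σ_{i<t} f_{μ-i} X^{t-1-i}; in particular after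
μ+1 steps it is the coefficient vector of f mod g; and
(2) the outputs form the quotient: f div g = Σ_{t=1}^{μ+1} o_t X^{μ+1-t}. -/
theorem stmt_16 {F : Type*} [Field F] (d μ : ℕ) (hd : 1 ≤ d)
    (g : Polynomial F) (hmonic : g.Monic) (hdeg : g.natDegree = d)
    (f : Polynomial F) (hf : f.natDegree ≤ μ)
    (S : ℕ → Fin d → F) (hS0 : S 0 = 0)
    (hstep : ∀ t ≤ μ, ∀ m : Fin d,
      S (t + 1) m = (if (m : ℕ) = 0 then f.coeff (μ - t)
          else S t ⟨(m : ℕ) - 1, by have := m.isLt; omega⟩)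
        - g.coeff m * S t ⟨d - 1, by omega⟩) :
    (∀ t, 1 ≤ t → t ≤ μ + 1 → ∀ m : Fin d,
        S t m = ((∑ i ∈ Finset.range t,
          Polynomial.C (f.coeff (μ - i)) * Polynomial.X ^ (t - 1 - i)) %ₘ g).coeff m) ∧
    (∀ m : Fin d, S (μ + 1) m = (f %ₘ g).coeff m) ∧
    f /ₘ g = ∑ t ∈ Finset.range (μ + 1),
      Polynomial.C (S t ⟨d - 1, by omega⟩) * Polynomial.X ^ (μ - t) := by
  have hstate := divisionRegister_state_eq_coeff_modByMonic hmonic hdeg hd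
    (fun i => f.coeff (μ - i)) (μ + 1) S hS0 fun t ht => hstep t (Nat.le_of_lt_succ ht)
  have hf_eq := hornerSum_coeff_sub_eq_self f hf
  refine ⟨fun t _ ht => hstate t ht, fun m => by rw [hstate _ le_rfl, hf_eq], ?_⟩
  subst hdeg
  conv_lhs => rw [← hf_eq, divByMonic_hornerSum hmonic hd, hornerSum]
  refine Finset.sum_congr rfl fun t ht => ?_
  rw [hstate t (Finset.mem_range.1 ht).le, Nat.add_sub_cancel]
end
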